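/- arXiv:2009.06832 — 2 statements merged into one kernel-verified Lean document; each statement's English description precedes it below -/
import Mathlib

section
/- Let γ ∈ (0,1), n ≥ 1, and 0 ≤ q ≤ τ. Let X = (X_1, …, X_n) be a standard Gaussian vector with law N(0, I_n) on a probability space (Ω, P) and let Δ = (Δ_1, …, Δ_n) be a random vector independent of X with |Δ_i| ≤ q almost surely for every i. Then P(|∑_{i=1}^n (Δ_i + X_i)| > √n · λ_γ(τ√n)) ≤ γ. (The RDT decision applied to observations with interference bounded by q ≤ τ has false alarm probability at most γ.) -/
open MeasureTheory ProbabilityTheory Real Filter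

/-- The cumulative distribution function `Φ` of the standard normal law `N(0,1)`. -/
noncomputable def Phi (x : ℝ) : ℝ := ((gaussianReal 0 1) (Set.Iic x)).toReal

/-- The inverse `Φ⁻¹` of the standard normal cdf (on `(0,1)`). -/
noncomputable def PhiInv (y : ℝ) : ℝ := Function.invFun Phi y

/-!
Put `D = ∑ Δᵢ` and `S = ∑ Xᵢ`. Then `S ~ N(0, n)` is independent of `D`, and `|D| ≤ τ n` almost
surely. Conditionally on `D = d`, the false alarm probability is `P(|a + Z| > λ)` with
`Z ~ N(0,1)` and `a = d / √n`, which equals `2 - Φ(λ - a) - Φ(λ + a)`. Since `γ < 1` forces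
`λ ≥ 0`, this is nondecreasing in `|a|`: the standard normal density is larger at `λ - u` than
at `λ + u`. As `|a| ≤ τ √n`, it is at most `γ`.
-/

open scoped NNReal ENNReal

namespace ProbabilityTheory

variable {Ω : Type*} [MeasurableSpace Ω] {P : Measure Ω} [IsProbabilityMeasure P]

lemma map_finsetSum_eq_gaussianReal {ι : Type*} {X : ι → Ω → ℝ} (hmeas : ∀ i, Measurable (X i))
    (hindep : iIndepFun X P) {m : ι → ℝ} {v : ι → ℝ≥0}
    (hX : ∀ i, P.map (X i) = gaussianReal (m i) (v i)) (s : Finset ι) :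
    P.map (∑ i ∈ s, X i) = gaussianReal (∑ i ∈ s, m i) (∑ i ∈ s, v i) := by
  classical
  induction s using Finset.induction_on with
  | empty =>
    rw [Finset.sum_empty, Finset.sum_empty, Finset.sum_empty, gaussianReal_zero_var]
    exact (Measure.map_const P 0).trans (by simp)
  | insert i s hi ih =>
    rw [Finset.sum_insert hi, Finset.sum_insert hi, Finset.sum_insert hi, add_comm (X i),
      add_comm (m i), add_comm (v i)]
    exact gaussianReal_add_gaussianReal_of_indepFun
      (hindep.indepFun_finsetSum_of_notMem hmeas hi) ih (hX i)

lemma IndepFun.measure_preimage_le {α β : Type*} [MeasurableSpace α] [MeasurableSpace β]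
    {X : Ω → α} {Y : Ω → β} (hXY : IndepFun X Y P) (hX : Measurable X) (hY : Measurable Y)
    {E : Set (α × β)} (hE : MeasurableSet E) {b : ℝ≥0∞}
    (h : ∀ᵐ x ∂P.map X, P.map Y (Prod.mk x ⁻¹' E) ≤ b) :
    P ((fun ω => (X ω, Y ω)) ⁻¹' E) ≤ b := by
  have := Measure.isProbabilityMeasure_map (μ := P) hX.aemeasurable
  rw [← Measure.map_apply (hX.prodMk hY) hE,
    (indepFun_iff_map_prod_eq_prod_map_map hX.aemeasurable hY.aemeasurable).mp hXY,
    Measure.prod_apply hE]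
  calc ∫⁻ x, P.map Y (Prod.mk x ⁻¹' E) ∂P.map X ≤ ∫⁻ _, b ∂P.map X := lintegral_mono_ae h
    _ = b := by simp

end ProbabilityTheory

lemma Phi_eq_measureReal (x : ℝ) : Phi x = (gaussianReal 0 1).real (Set.Iic x) := rfl

lemma Phi_mono : Monotone Phi := fun _ _ h =>
  measureReal_mono (Set.Iic_subset_Iic.mpr h)

lemma Phi_neg (x : ℝ) : Phi (-x) = 1 - Phi x := by
  have := nullSingletonClass_gaussianReal (μ := 0) one_ne_zero
  have hsymm : (gaussianReal 0 1).real (Set.Iic (-x)) = (gaussianReal 0 1).real (Set.Ici x) := by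
    conv_rhs => rw [← neg_zero, ← gaussianReal_map_neg,
      map_measureReal_apply measurable_neg measurableSet_Ici]
    congr 1; ext; simp
  rw [Phi_eq_measureReal, hsymm, measureReal_congr Ioi_ae_eq_Ici.symm, ← Set.compl_Iic,
    measureReal_compl measurableSet_Iic, probReal_univ, Phi_eq_measureReal]

lemma gaussianReal_real_Ioc {s t : ℝ} (h : s ≤ t) :
    (gaussianReal 0 1).real (Set.Ioc s t) = Phi t - Phi s := by
  rw [← Set.Iic_sdiff_Iic, measureReal_sdiff (Set.Iic_subset_Iic.mpr h) measurableSet_Iic]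
  rfl

lemma Phi_sub_Phi {s t : ℝ} (h : s ≤ t) :
    Phi t - Phi s = ∫ x in s..t, gaussianPDFReal 0 1 x := by
  rw [← gaussianReal_real_Ioc h, intervalIntegral.integral_of_le h, measureReal_def,
    gaussianReal_apply_eq_integral 0 one_ne_zero, ENNReal.toReal_ofReal
      (setIntegral_nonneg measurableSet_Ioc fun x _ => gaussianPDFReal_nonneg 0 1 x)]

lemma gaussianPDFReal_add_le_sub {c u : ℝ} (hc : 0 ≤ c) (hu : 0 ≤ u) :
    gaussianPDFReal 0 1 (c + u) ≤ gaussianPDFReal 0 1 (c - u) := by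
  rw [gaussianPDFReal, gaussianPDFReal]
  gcongr _ * rexp (-?_ / _)
  nlinarith

lemma Phi_sub_add_Phi_add_le {c b A : ℝ} (hc : 0 ≤ c) (hb : 0 ≤ b) (hbA : b ≤ A) :
    Phi (c - A) + Phi (c + A) ≤ Phi (c - b) + Phi (c + b) := by
  have hφ : Continuous (gaussianPDFReal 0 1) := by unfold gaussianPDFReal; fun_prop
  have hright : Phi (c + A) - Phi (c + b) = ∫ u in b..A, gaussianPDFReal 0 1 (c + u) := by
    rw [intervalIntegral.integral_comp_add_left, Phi_sub_Phi (by linarith)]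
  have hleft : Phi (c - b) - Phi (c - A) = ∫ u in b..A, gaussianPDFReal 0 1 (c - u) := by
    rw [intervalIntegral.integral_comp_sub_left, Phi_sub_Phi (by linarith)]
  have hmono :
      ∫ u in b..A, gaussianPDFReal 0 1 (c + u) ≤ ∫ u in b..A, gaussianPDFReal 0 1 (c - u) :=
    intervalIntegral.integral_mono_on hbA
      ((hφ.comp (continuous_const_add c)).intervalIntegrable _ _)
      ((hφ.comp (continuous_sub_left c)).intervalIntegrable _ _)
      fun u hu => gaussianPDFReal_add_le_sub hc (hb.trans hu.1)
  linarith

lemma Phi_sub_add_Phi_add_le_of_abs_le {c a A : ℝ} (hc : 0 ≤ c) (ha : |a| ≤ A) :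
    Phi (c - A) + Phi (c + A) ≤ Phi (c - a) + Phi (c + a) := by
  rcases abs_cases a with ⟨habs, -⟩ | ⟨habs, -⟩
  · exact habs ▸ Phi_sub_add_Phi_add_le hc (abs_nonneg a) ha
  · have := Phi_sub_add_Phi_add_le hc (abs_nonneg a) ha
    rw [habs, sub_neg_eq_add, ← sub_eq_add_neg] at this
    linarith

lemma gaussianReal_real_lt_abs_add {c : ℝ} (hc : 0 ≤ c) (a : ℝ) :
    (gaussianReal 0 1).real {z | c < |a + z|} = 2 - Phi (c - a) - Phi (c + a) := by
  have := nullSingletonClass_gaussianReal (μ := 0) one_ne_zero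
  have hcompl : {z | c < |a + z|} = (Set.Icc (-c - a) (c - a))ᶜ := by
    ext z
    simp only [Set.mem_ofPred_eq, Set.mem_compl_iff, Set.mem_Icc, lt_abs, not_and_or, not_le]
    constructor <;> rintro (h | h) <;> [right; left; right; left] <;> linarith
  rw [hcompl, measureReal_compl measurableSet_Icc, probReal_univ,
    ← measureReal_congr (Ioc_ae_eq_Icc' (measure_singleton _)),
    gaussianReal_real_Ioc (by linarith), show -c - a = -(c + a) by ring, Phi_neg]
  ring

lemma nonneg_of_two_sub_Phi_sub_Phi_lt_one {c A : ℝ} (h : 2 - Phi (c - A) - Phi (c + A) < 1) :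
    0 ≤ c := by
  by_contra! hc
  have := Phi_mono (show c - A ≤ -(c + A) by linarith)
  rw [Phi_neg] at this
  linarith

lemma gaussianReal_real_sqrt_mul_lt_abs_add {v : ℝ≥0} (hv : v ≠ 0) (c d : ℝ) :
    (gaussianReal 0 v).real {s | √v * c < |d + s|}
      = (gaussianReal 0 1).real {z | c < |d / √v + z|} := by
  have hσ : 0 < √(v : ℝ) := Real.sqrt_pos.mpr (by positivity)
  have hscale : gaussianReal 0 v = (gaussianReal 0 1).map (√v * ·) := by
    rw [gaussianReal_map_const_mul, mul_zero, mul_one]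
    congr
    exact NNReal.eq (Real.sq_sqrt v.coe_nonneg).symm
  rw [hscale, map_measureReal_apply (measurable_const_mul _)
    (measurableSet_lt measurable_const (measurable_const_add d).abs)]
  congr 1
  ext z
  simp only [Set.mem_preimage, Set.mem_ofPred_eq]
  rw [show d + √v * z = √v * (d / √v + z) by field_simp, abs_mul, abs_of_pos hσ,
    mul_lt_mul_iff_right₀ hσ]

lemma gaussianReal_sqrt_mul_lt_abs_add_le {v : ℝ≥0} (hv : v ≠ 0) {c τ d : ℝ} (hc : 0 ≤ c)
    (hd : |d| ≤ τ * v) :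
    gaussianReal 0 v {s | √v * c < |d + s|}
      ≤ ENNReal.ofReal (2 - Phi (c - τ * √v) - Phi (c + τ * √v)) := by
  have hσ : 0 < √(v : ℝ) := Real.sqrt_pos.mpr (by positivity)
  have hdσ : |d / √v| ≤ τ * √v := by
    rw [abs_div, abs_of_pos hσ, div_le_iff₀ hσ, mul_assoc, Real.mul_self_sqrt v.coe_nonneg]
    exact hd
  rw [← ofReal_measureReal, gaussianReal_real_sqrt_mul_lt_abs_add hv,
    gaussianReal_real_lt_abs_add hc]
  have := Phi_sub_add_Phi_add_le_of_abs_le hc hdσ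
  exact ENNReal.ofReal_le_ofReal (by linarith)

theorem stmt9_general {Ω : Type*} [MeasurableSpace Ω] (P : Measure Ω) [IsProbabilityMeasure P]
    (γ q τ : ℝ) (hγ : γ ∈ Set.Ioo (0 : ℝ) 1) (hqτ : q ≤ τ)
    (n : ℕ) (hn : 1 ≤ n)
    (X : Fin n → Ω → ℝ) (hmeas : ∀ i, Measurable (X i))
    (hindep : iIndepFun X P)
    (hdist : ∀ i, Measure.map (X i) P = gaussianReal 0 1)
    (Δ : Ω → Fin n → ℝ) (hΔmeas : Measurable Δ)
    (hΔX : IndepFun Δ (fun ω i => X i ω) P)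
    (hΔbnd : ∀ i, ∀ᵐ ω ∂P, |Δ ω i| ≤ q)
    (lam : ℝ)
    (hlam : 2 - Phi (lam - τ * Real.sqrt n) - Phi (lam + τ * Real.sqrt n) = γ) :
    P {ω | Real.sqrt n * lam < |∑ i, (Δ ω i + X i ω)|} ≤ ENNReal.ofReal γ := by
  have hsum : Measurable fun x : Fin n → ℝ => ∑ i, x i :=
    Finset.measurable_sum _ fun i _ => measurable_pi_apply i
  have hS : P.map (fun ω => ∑ i, X i ω) = gaussianReal 0 n := by
    simpa [← Finset.sum_fn] using map_finsetSum_eq_gaussianReal hmeas hindep hdist Finset.univ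
  have hDmeas : Measurable fun ω => ∑ i, Δ ω i := hsum.comp hΔmeas
  have hSmeas : Measurable fun ω => ∑ i, X i ω := hsum.comp (measurable_pi_lambda _ hmeas)
  have hD : ∀ᵐ d ∂P.map (fun ω => ∑ i, Δ ω i), |d| ≤ τ * n := by
    refine (ae_map_iff hDmeas.aemeasurable
      (measurableSet_le measurable_id.abs measurable_const)).mpr ?_
    filter_upwards [ae_all_iff.mpr hΔbnd] with ω hω
    calc |∑ i, Δ ω i| ≤ ∑ i, |Δ ω i| := Finset.abs_sum_le_sum_abs _ _
      _ ≤ ∑ _i : Fin n, τ := Finset.sum_le_sum fun i _ => (hω i).trans hqτ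
      _ = τ * n := by simp [mul_comm]
  have hlam0 : 0 ≤ lam := nonneg_of_two_sub_Phi_sub_Phi_lt_one (hlam ▸ hγ.2)
  simp_rw [Finset.sum_add_distrib]
  refine (hΔX.comp hsum hsum).measure_preimage_le hDmeas hSmeas
    (E := {p | √n * lam < |p.1 + p.2|})
    (measurableSet_lt measurable_const (measurable_fst.add measurable_snd).abs) ?_
  filter_upwards [hD] with d hd
  have := gaussianReal_sqrt_mul_lt_abs_add_le (v := n) (Nat.cast_ne_zero.mpr (by omega)) hlam0
    (by exact_mod_cast hd)
  simpa only [Function.comp_def, hS, Set.preimage_ofPred_eq, NNReal.coe_natCast, hlam] using this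

/-- the RDT decision applied to observations with interference bounded by
q ≤ τ has false alarm probability at most γ. -/
theorem stmt9 {Ω : Type*} [MeasurableSpace Ω] (P : Measure Ω) [IsProbabilityMeasure P]
    (γ q τ : ℝ) (hγ : γ ∈ Set.Ioo (0 : ℝ) 1) (hq : 0 ≤ q) (hqτ : q ≤ τ)
    (n : ℕ) (hn : 1 ≤ n)
    (X : Fin n → Ω → ℝ) (hmeas : ∀ i, Measurable (X i))
    (hindep : iIndepFun X P)
    (hdist : ∀ i, Measure.map (X i) P = gaussianReal 0 1)
    (Δ : Ω → Fin n → ℝ) (hΔmeas : Measurable Δ)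
    (hΔX : IndepFun Δ (fun ω i => X i ω) P)
    (hΔbnd : ∀ i, ∀ᵐ ω ∂P, |Δ ω i| ≤ q)
    (lam : ℝ)
    (hlam : 2 - Phi (lam - τ * Real.sqrt n) - Phi (lam + τ * Real.sqrt n) = γ) :
    P {ω | Real.sqrt n * lam < |∑ i, (Δ ω i + X i ω)|} ≤ ENNReal.ofReal γ :=
  stmt9_general P γ q τ hγ hqτ n hn X hmeas hindep hdist Δ hΔmeas hΔX hΔbnd lam hlam
end

section
/- For every fixed γ ∈ (0,1), the RDT threshold satisfies lim_{a → ∞} (λ_γ(a) − a) = Φ⁻¹(1 − γ). -/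
/-!
Write `c = Φ⁻¹(1 - γ)` and `x = λ_γ(a) - a`. The defining equation reads
`Φ(x) = 1 - γ + (1 - Φ(x + 2a))`, so `Φ(x) ≥ Φ(c)`, i.e. `x ≥ c`. Hence `x + 2a ≥ c + 2a → ∞`,
the correction term `1 - Φ(x + 2a)` vanishes, `Φ(x) → Φ(c)`, and strict monotonicity of `Φ`
turns this into `x → c`.
-/

open MeasureTheory ProbabilityTheory Real Filter

open Set Topology

theorem StrictMono.tendsto_nhds_of_tendsto_apply {ι α β : Type*}
    [LinearOrder α] [TopologicalSpace α] [OrderTopology α]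
    [LinearOrder β] [TopologicalSpace β] [OrderTopology β]
    {f : α → β} (hf : StrictMono f) {u : ι → α} {l : Filter ι} {c : α}
    (h : Tendsto (f ∘ u) l (𝓝 (f c))) : Tendsto u l (𝓝 c) := by
  rw [tendsto_order] at h ⊢
  refine ⟨fun b hb => ?_, fun b hb => ?_⟩
  · filter_upwards [h.1 _ (hf hb)] with i hi using hf.lt_iff_lt.1 hi
  · filter_upwards [h.2 _ (hf hb)] with i hi using hf.lt_iff_lt.1 hi

namespace ProbabilityTheory

variable (μ : Measure ℝ) [IsProbabilityMeasure μ]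

theorem continuous_cdf [NullSingletonClass μ] : Continuous (cdf μ) := by
  refine continuous_iff_continuousAt.2 fun x => ?_
  have hjump : ENNReal.ofReal (cdf μ x - Function.leftLim (cdf μ) x) = 0 := by
    rw [← StieltjesFunction.measure_singleton, measure_cdf, measure_singleton]
  have hle : Function.leftLim (cdf μ) x ≤ cdf μ x := (cdf μ).mono.leftLim_le le_rfl
  rw [(cdf μ).mono.continuousAt_iff_leftLim_eq_rightLim, (cdf μ).rightLim_eq]
  linarith [ENNReal.ofReal_eq_zero.1 hjump]

theorem strictMono_cdf (h : volume ≪ μ) : StrictMono (cdf μ) := by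
  intro x y hxy
  have hpos : μ (Ioc x y) ≠ 0 := fun h0 => by simpa [hxy.not_ge] using h h0
  rwa [← measure_cdf μ, StieltjesFunction.measure_Ioc, ne_eq, ENNReal.ofReal_eq_zero, not_le,
    sub_pos] at hpos

end ProbabilityTheory

theorem Phi_eq_cdf : Phi = cdf (gaussianReal 0 1) :=
  funext fun x => ((cdf_eq_real _ x).trans (measureReal_def _ _)).symm

theorem Phi_continuous : Continuous Phi := by
  have : NullSingletonClass (gaussianReal 0 1) :=
    ⟨fun x => gaussianReal_absolutelyContinuous 0 one_ne_zero (measure_singleton x)⟩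
  rw [Phi_eq_cdf]
  exact continuous_cdf _

theorem Phi_strictMono : StrictMono Phi :=
  Phi_eq_cdf ▸ strictMono_cdf _ (gaussianReal_absolutelyContinuous' 0 one_ne_zero)

theorem Phi_le_one (x : ℝ) : Phi x ≤ 1 := Phi_eq_cdf ▸ cdf_le_one _ x

theorem Phi_tendsto_atTop : Tendsto Phi atTop (𝓝 1) := Phi_eq_cdf ▸ tendsto_cdf_atTop _

theorem Phi_tendsto_atBot : Tendsto Phi atBot (𝓝 0) := Phi_eq_cdf ▸ tendsto_cdf_atBot _

theorem Phi_PhiInv {y : ℝ} (hy : y ∈ Ioo (0 : ℝ) 1) : Phi (PhiInv y) = y :=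
  Function.invFun_eq <| mem_range_of_exists_le_of_exists_ge Phi_continuous
    (Phi_tendsto_atBot.eventually_le_const hy.1).exists
    (Phi_tendsto_atTop.eventually_const_le hy.2).exists

/-- the RDT threshold satisfies λ_γ(a) - a → Φ⁻¹(1-γ) as a → ∞. -/
theorem stmt11 (γ : ℝ) (hγ : γ ∈ Set.Ioo (0 : ℝ) 1)
    (lam : ℝ → ℝ)
    (hlam : ∀ a : ℝ, 0 ≤ a → 2 - Phi (lam a - a) - Phi (lam a + a) = γ) :
    Filter.Tendsto (fun a => lam a - a) Filter.atTop (nhds (PhiInv (1 - γ))) := by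
  set c := PhiInv (1 - γ)
  have hc : Phi c = 1 - γ := Phi_PhiInv ⟨by linarith [hγ.2], by linarith [hγ.1]⟩
  have hlow : ∀ a, 0 ≤ a → c ≤ lam a - a := fun a ha =>
    Phi_strictMono.le_iff_le.1 (by linarith [hlam a ha, Phi_le_one (lam a + a)])
  have hplus : Tendsto (fun a => lam a + a) atTop atTop :=
    tendsto_atTop_mono' atTop
      (by filter_upwards [eventually_ge_atTop 0] with a ha using by simp only [id]; linarith [hlow a ha])
      (tendsto_atTop_add_const_left _ c (tendsto_id.const_mul_atTop two_pos))
  have hshift : Tendsto (fun a => 1 - γ + (1 - Phi (lam a + a))) atTop (𝓝 (1 - γ)) := by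
    simpa using ((Phi_tendsto_atTop.comp hplus).const_sub 1).const_add (1 - γ)
  refine Phi_strictMono.tendsto_nhds_of_tendsto_apply (hc ▸ hshift.congr' ?_)
  filter_upwards [eventually_ge_atTop 0] with a ha
  simp only [Function.comp_apply]
  linarith [hlam a ha]
end
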